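/- Let G be a noncompact locally compact second countable group, (Y, γ) a standard nonatomic probability space, T = (T_g)_{g∈G} a γ-preserving Borel G-action, and 𝐁 = (B_n)_{n≥1} measurable subsets with γ(B_n) = 1/2 for all n, such that for every compact K ⊆ G, ∑_{n=1}^∞ sup_{g∈K} γ(T_g B_n △ B_n) < ∞. Let μ = γ^𝐁 on X = Y^ℕ and 𝐓_g := T_g × T_g × ⋯. Then each 𝐓_g preserves μ, μ(𝐁^n) = 2^n for every n (so μ(X) = ∞), and (𝐁^n)_{n≥1} is an exhausting 𝐓-Følner sequence: 𝐁^1 ⊆ 𝐁^2 ⊆ ⋯, ⋃_n 𝐁^n = X, and for every compact K ⊆ G, sup_{g∈K} μ(𝐓_g 𝐁^n △ 𝐁^n)/μ(𝐁^n) → 0 as n → ∞. -/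

import Mathlib

/-!
The restricted power `μ = γ^𝐁` is determined by its values on cylinders `∏ⱼ C j` with
`C j = B j` for large `j`, together with the fact that it lives on `⋃ₙ 𝐁ⁿ`. A point of such a
cylinder that leaves `tailCylinder S N` does so through one coordinate `j ≥ N`, where it lies in
`B j \ S j`; this event has relative mass `γ (B j \ S j) / γ (B j)`. For `S j = f⁻¹ B j` with `f`
preserving `γ` and `∑ⱼ γ (B j \ f⁻¹ B j) < ∞`, the tail sums tend to zero, so the coordinatewise map
`f × f × ⋯` sends cylinders and `⋃ₙ 𝐁ⁿ` to sets of the same `μ`-measure, i.e. it preserves `μ`.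
The same estimate gives `μ (𝐓_g 𝐁ⁿ ∆ 𝐁ⁿ) ≤ 4 μ 𝐁ⁿ ∑_{j ≥ n} sup_{g ∈ K} γ (T_g B j ∆ B j)`,
whence the Følner property.
-/

open MeasureTheory Filter Topology Set ENNReal

noncomputable section

section ActionDefs

variable {G X : Type*}

/-- A Borel action of a group `G` on a measurable space `X`. -/
def IsBorelAction [Group G] [MeasurableSpace G] [MeasurableSpace X]
    (T : G → X → X) : Prop :=
  Measurable (Function.uncurry T) ∧ (∀ x, T 1 x = x) ∧ ∀ g h x, T (g * h) x = T g (T h x)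

/-- A measure-preserving Borel action. -/
def IsMPAction [Group G] [MeasurableSpace G] [MeasurableSpace X]
    (μ : Measure X) (T : G → X → X) : Prop :=
  IsBorelAction T ∧ ∀ g, MeasurePreserving (T g) μ μ

/-- A nonsingular Borel action: each `μ ∘ T g` is mutually absolutely continuous with `μ`. -/
def IsNonsingularAction [Group G] [MeasurableSpace G] [MeasurableSpace X]
    (μ : Measure X) (T : G → X → X) : Prop :=
  IsBorelAction T ∧ ∀ g, μ.map (T g) ≪ μ ∧ μ ≪ μ.map (T g)

/-- An action is of 0-type if `μ (T g A ∩ B) → 0` as `g → ∞` along the cocompact filter,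
for all sets `A`, `B` of finite measure. -/
def IsZeroType [Group G] [MeasurableSpace G] [TopologicalSpace G] [MeasurableSpace X]
    (μ : Measure X) (T : G → X → X) : Prop :=
  ∀ A B : Set X, MeasurableSet A → MeasurableSet B → μ A ≠ ∞ → μ B ≠ ∞ →
    Tendsto (fun g : G => μ (T g '' A ∩ B)) (cocompact G) (𝓝 0)

/-- A probability-preserving action is mixing if `μ (T g A ∩ B) → μ A * μ B` as `g → ∞`. -/
def IsMixingAction [Group G] [MeasurableSpace G] [TopologicalSpace G] [MeasurableSpace X]
    (μ : Measure X) (T : G → X → X) : Prop :=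
  ∀ A B : Set X, MeasurableSet A → MeasurableSet B →
    Tendsto (fun g : G => μ (T g '' A ∩ B)) (cocompact G) (𝓝 (μ A * μ B))

/-- A free action: a.e. point has trivial stabilizer. -/
def IsFreeAction [Group G] [MeasurableSpace X] (μ : Measure X) (T : G → X → X) : Prop :=
  ∀ᵐ x ∂μ, ∀ g : G, T g x = x → g = 1

/-- A `T`-Følner sequence of sets of finite positive measure. -/
def IsFolner [Group G] [TopologicalSpace G] [MeasurableSpace X]
    (μ : Measure X) (T : G → X → X) (A : ℕ → Set X) : Prop :=
  (∀ n, MeasurableSet (A n) ∧ 0 < μ (A n) ∧ μ (A n) ≠ ∞) ∧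
    ∀ K : Set G, IsCompact K →
      Tendsto (fun n => ⨆ g ∈ K, μ (symmDiff (T g '' A n) (A n)) / μ (A n)) atTop (𝓝 0)

/-- The restriction of the action to an invariant set `A` is totally dissipative:
there is a measurable subset `W ⊆ A` meeting the orbit of a.e. point of `A` exactly once,
and a.e. point of `A` has compact stabilizer. -/
def IsTotallyDissipativeOn [Group G] [TopologicalSpace G] [MeasurableSpace X]
    (μ : Measure X) (T : G → X → X) (A : Set X) : Prop :=
  ∃ W : Set X, MeasurableSet W ∧ W ⊆ A ∧
    ∀ᵐ z ∂(μ.restrict A),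
      (∃! w, w ∈ W ∧ ∃ g : G, T g z = w) ∧ IsCompact {g : G | T g z = z}

/-- A totally dissipative action. -/
def IsTotallyDissipative [Group G] [TopologicalSpace G] [MeasurableSpace X]
    (μ : Measure X) (T : G → X → X) : Prop :=
  IsTotallyDissipativeOn μ T Set.univ

/-- The restriction of the action to the invariant set `A` is conservative: no invariant
subset of `A` of positive measure on which the action is totally dissipative. -/
def IsConservativeOn [Group G] [TopologicalSpace G] [MeasurableSpace X]
    (μ : Measure X) (T : G → X → X) (A : Set X) : Prop :=
  ¬ ∃ B : Set X, B ⊆ A ∧ MeasurableSet B ∧ 0 < μ B ∧ (∀ g : G, T g ⁻¹' B = B) ∧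
      IsTotallyDissipativeOn μ T B

/-- A conservative action. -/
def IsConservativeAction [Group G] [TopologicalSpace G] [MeasurableSpace X]
    (μ : Measure X) (T : G → X → X) : Prop :=
  IsConservativeOn μ T Set.univ

/-- An ergodic action: every a.e. invariant set is null or conull. -/
def IsErgodicAction [Group G] [MeasurableSpace X] (μ : Measure X) (T : G → X → X) : Prop :=
  ∀ A : Set X, MeasurableSet A → (∀ g : G, μ (symmDiff (T g '' A) A) = 0) →
    μ A = 0 ∨ μ Aᶜ = 0

/-- A properly ergodic action: ergodic, and the measure is not concentrated on one orbit. -/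
def IsProperlyErgodic [Group G] [MeasurableSpace X] (μ : Measure X) (T : G → X → X) : Prop :=
  IsErgodicAction μ T ∧ ¬ ∃ z : X, μ {y | ∃ g : G, T g z = y}ᶜ = 0

/-- A weakly mixing action: the product with every ergodic probability-preserving action
on a standard probability space is ergodic. -/
def IsWeaklyMixingAction [Group G] [MeasurableSpace G] [MeasurableSpace X]
    (μ : Measure X) (T : G → X → X) : Prop :=
  ∀ (Z : Type) [MeasurableSpace Z] [StandardBorelSpace Z] (κ : Measure Z)
    [IsProbabilityMeasure κ] (R : G → Z → Z),
    IsMPAction κ R → IsErgodicAction κ R →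
      IsErgodicAction (μ.prod κ) (fun g p => (T g p.1, R g p.2))

/-- A sharply weak mixing action: properly ergodic, and the product with every ergodic
conservative nonsingular action on a nonatomic standard probability space is either
ergodic or totally dissipative. -/
def IsSharplyWeakMixing [Group G] [MeasurableSpace G] [TopologicalSpace G] [MeasurableSpace X]
    (μ : Measure X) (T : G → X → X) : Prop :=
  IsProperlyErgodic μ T ∧
    ∀ (Z : Type) [MeasurableSpace Z] [StandardBorelSpace Z] (κ : Measure Z)
      [IsProbabilityMeasure κ] (R : G → Z → Z),
      (∀ z : Z, κ {z} = 0) →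
      IsNonsingularAction κ R → IsErgodicAction κ R → IsConservativeAction κ R →
        (IsErgodicAction (μ.prod κ) (fun g p => (T g p.1, R g p.2)) ∨
          IsTotallyDissipative (μ.prod κ) (fun g p => (T g p.1, R g p.2)))

end ActionDefs

/-- A witness for the Haagerup property: a weakly continuous unitary representation of `G`
on a separable complex Hilbert space whose matrix coefficients vanish at infinity and which
has almost-invariant unit vectors. -/
structure HaagerupWitness (G : Type*) [Group G] [TopologicalSpace G] where
  (E : Type)
  [nacg : NormedAddCommGroup E]
  [ips : InnerProductSpace ℂ E]
  [cs : CompleteSpace E]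
  [sct : SecondCountableTopology E]
  (V : G →* (E ≃ₗᵢ[ℂ] E))
  (weak_cont : ∀ ξ η : E, Continuous fun g : G => (inner ℂ (V g ξ) η : ℂ))
  (c0 : ∀ ξ η : E, Tendsto (fun g : G => (inner ℂ (V g ξ) η : ℂ)) (cocompact G) (𝓝 0))
  (almost_inv : ∀ ε : ℝ, 0 < ε → ∀ K : Set G, IsCompact K →
    ∃ ξ : E, ‖ξ‖ = 1 ∧ ∀ g ∈ K, ‖V g ξ - ξ‖ < ε)

/-- The Haagerup property for a topological group `G`. -/
def HasHaagerupProperty (G : Type*) [Group G] [TopologicalSpace G] : Prop :=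
  Nonempty (HaagerupWitness G)

/-- Property (T) for the pair `H ⊆ G`: every weakly continuous unitary representation of `G`
on a separable complex Hilbert space with almost-invariant unit vectors has a nonzero
`H`-invariant vector. -/
def HasPropertyTPair (G : Type*) [Group G] [TopologicalSpace G] (H : Subgroup G) : Prop :=
  ∀ (E : Type) [NormedAddCommGroup E] [InnerProductSpace ℂ E] [CompleteSpace E]
    [SecondCountableTopology E] (V : G →* (E ≃ₗᵢ[ℂ] E)),
    (∀ ξ η : E, Continuous fun g : G => (inner ℂ (V g ξ) η : ℂ)) →
    (∀ ε : ℝ, 0 < ε → ∀ K : Set G, IsCompact K →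
      ∃ ξ : E, ‖ξ‖ = 1 ∧ ∀ g ∈ K, ‖V g ξ - ξ‖ < ε) →
    ∃ η : E, η ≠ 0 ∧ ∀ h ∈ H, V h η = η

/-- The squared Hellinger distance of two measures `α`, `β` with respect to a reference
measure `γ`. -/
def hellingerSq {Y : Type*} [MeasurableSpace Y] (γ α β : Measure Y) : ℝ :=
  (1 / 2) * ∫ y, (Real.sqrt (α.rnDeriv γ y).toReal - Real.sqrt (β.rnDeriv γ y).toReal) ^ 2 ∂γ

/-- The tail cylinder `𝐁ⁿ = Yⁿ × B n × B (n+1) × ⋯` (with `0`-based indexing): the set of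
sequences whose `j`-th coordinate lies in `B j` for every `j ≥ n`. -/
def tailCylinder {Y : Type*} (B : ℕ → Set Y) (n : ℕ) : Set (ℕ → Y) :=
  {x : ℕ → Y | ∀ j, n ≤ j → x j ∈ B j}

lemma tailCylinder_mono {Y : Type*} (B : ℕ → Set Y) : Monotone (tailCylinder B) :=
  fun _ _ hmn _ hx j hj => hx j (hmn.trans hj)

lemma tailCylinder_eq_univ_pi {Y : Type*} (B : ℕ → Set Y) (n : ℕ) :
    tailCylinder B n = univ.pi fun j => if n ≤ j then B j else univ := by
  ext x
  simp [tailCylinder]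

lemma univ_pi_inter_tailCylinder {Y : Type*} (D B : ℕ → Set Y) (N : ℕ) :
    univ.pi D ∩ tailCylinder B N =
      univ.pi (fun j => if j < N then D j else B j) ∩ tailCylinder D N := by
  ext x
  simp only [mem_inter_iff, mem_univ_pi, tailCylinder]
  constructor
  · rintro ⟨hxD, hxB⟩
    exact ⟨fun j => by split_ifs with hj; exacts [hxD j, hxB j (not_lt.1 hj)], fun j _ => hxD j⟩
  · rintro ⟨hxE, hxD⟩
    refine ⟨fun j => ?_, fun j hj => by simpa [not_lt.2 hj] using hxE j⟩
    by_cases hj : j < N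
    · simpa [hj] using hxE j
    · exact hxD j (not_lt.1 hj)

lemma MeasureTheory.MeasurePreserving.measure_preimage_symmDiff {α : Type*} [MeasurableSpace α]
    {μ : Measure α} {f : α → α} (hf : MeasurePreserving f μ μ) {s : Set α}
    (hs : MeasurableSet s) (hμs : μ s ≠ ∞) :
    μ (symmDiff (f ⁻¹' s) s) = 2 * μ (s \ f ⁻¹' s) := by
  have hfs := (hf.measurable hs).nullMeasurableSet (μ := μ)
  rw [measure_symmDiff_eq hfs hs.nullMeasurableSet, measure_sdiff_symm hfs hs.nullMeasurableSet
    (hf.measure_preimage hs.nullMeasurableSet) (measure_ne_top_of_subset inter_subset_right hμs),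
    two_mul]

section RestrictedPower

variable {Y : Type*} [MeasurableSpace Y]

lemma measurableSet_ite_le {B : ℕ → Set Y} (hB : ∀ j, MeasurableSet (B j)) (n j : ℕ) :
    MeasurableSet (if n ≤ j then B j else univ) := by
  split_ifs <;> simp [hB j]

lemma measurableSet_tailCylinder {B : ℕ → Set Y} (hB : ∀ j, MeasurableSet (B j)) (n : ℕ) :
    MeasurableSet (tailCylinder B n) :=
  MeasurableSet.pi (to_countable _) fun j _ => hB j

lemma prod_range_div_eq_of_le {γ : Measure Y} [IsFiniteMeasure γ] {B C : ℕ → Set Y}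
    (hB0 : ∀ j, γ (B j) ≠ 0) {m N : ℕ} (hCB : ∀ j, m ≤ j → γ (C j) = γ (B j)) (hmN : m ≤ N) :
    ∏ j ∈ Finset.range N, γ (C j) / γ (B j) = ∏ j ∈ Finset.range m, γ (C j) / γ (B j) := by
  have hone : ∏ j ∈ Finset.Ico m N, γ (C j) / γ (B j) = 1 := Finset.prod_eq_one fun j hj => by
    rw [hCB j (Finset.mem_Ico.1 hj).1]
    exact ENNReal.div_self (hB0 j) (measure_ne_top γ _)
  rw [← Finset.prod_range_mul_prod_Ico _ hmN, hone, mul_one]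

/-- `μ` is the restricted infinite power `γ^𝐁`, encoded by the masses of the cylinders
`∏ⱼ C j` with `C j = B j` for `j ≥ m` together with the fact that `μ` lives on `⋃ₙ 𝐁ⁿ`. -/
structure IsRestrictedPower (γ : Measure Y) (B : ℕ → Set Y) (μ : Measure (ℕ → Y)) : Prop where
  measure_univ_pi : ∀ (m : ℕ) (C : ℕ → Set Y), (∀ j, MeasurableSet (C j)) →
    (∀ j, m ≤ j → C j = B j) → μ (univ.pi C) = ∏ j ∈ Finset.range m, γ (C j) / γ (B j)
  measure_compl_iUnion_tailCylinder : μ (⋃ n, tailCylinder B n)ᶜ = 0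

namespace IsRestrictedPower

variable {γ : Measure Y} {B : ℕ → Set Y} {μ ν : Measure (ℕ → Y)}

lemma measure_tailCylinder (hμ : IsRestrictedPower γ B μ) (hB : ∀ j, MeasurableSet (B j))
    (n : ℕ) : μ (tailCylinder B n) = ∏ j ∈ Finset.range n, γ univ / γ (B j) := by
  rw [tailCylinder_eq_univ_pi, hμ.measure_univ_pi n _ (measurableSet_ite_le hB n)
    fun j hj => if_pos hj]
  exact Finset.prod_congr rfl fun j hj => by rw [if_neg (by simpa using Finset.mem_range.1 hj)]

lemma measure_tailCylinder_ne_top (hμ : IsRestrictedPower γ B μ) [IsFiniteMeasure γ]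
    (hB0 : ∀ j, γ (B j) ≠ 0) (hB : ∀ j, MeasurableSet (B j)) (n : ℕ) :
    μ (tailCylinder B n) ≠ ∞ := by
  rw [hμ.measure_tailCylinder hB]
  exact ENNReal.prod_ne_top fun j _ => ENNReal.div_ne_top (measure_ne_top γ _) (hB0 j)

lemma tendsto_measure_inter_tailCylinder (hμ : IsRestrictedPower γ B μ) (s : Set (ℕ → Y)) :
    Tendsto (fun n => μ (s ∩ tailCylinder B n)) atTop (𝓝 (μ s)) := by
  have h := tendsto_measure_iUnion_atTop (μ := μ)
    fun _ _ hmn => inter_subset_inter_right s (tailCylinder_mono B hmn)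
  rwa [← inter_iUnion, measure_inter_conull hμ.measure_compl_iUnion_tailCylinder] at h

lemma measure_univ_pi_update (hμ : IsRestrictedPower γ B μ) [IsFiniteMeasure γ]
    (hB0 : ∀ j, γ (B j) ≠ 0) {C : ℕ → Set Y} (hC : ∀ j, MeasurableSet (C j)) {N : ℕ}
    (hCB : ∀ j, N ≤ j → C j = B j) {j : ℕ} (hNj : N ≤ j) {D : Set Y} (hD : MeasurableSet D) :
    μ (univ.pi (Function.update C j D)) = μ (univ.pi C) * (γ D / γ (B j)) := by
  have hmeas : ∀ i, MeasurableSet (Function.update C j D i) := fun i => by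
    rcases eq_or_ne i j with rfl | hij
    · simpa using hD
    · simpa [hij] using hC i
  rw [hμ.measure_univ_pi (j + 1) _ hmeas fun i hi => by
      rw [Function.update_of_ne (by omega)]; exact hCB i (by omega),
    Finset.prod_range_succ, Function.update_self, hμ.measure_univ_pi N C hC hCB,
    ← prod_range_div_eq_of_le hB0 (fun i hi => by rw [hCB i hi]) hNj]
  congr 1
  exact Finset.prod_congr rfl fun i hi => by
    rw [Function.update_of_ne (Finset.mem_range.1 hi).ne]

/-- A point of `∏ⱼ C j` leaves `tailCylinder S N` through some coordinate `j ≥ N`, which costs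
the factor `γ (B j \ S j) / γ (B j)`. -/
lemma measure_univ_pi_diff_tailCylinder_le (hμ : IsRestrictedPower γ B μ) [IsFiniteMeasure γ]
    (hB0 : ∀ j, γ (B j) ≠ 0) (hB : ∀ j, MeasurableSet (B j)) {C : ℕ → Set Y}
    (hC : ∀ j, MeasurableSet (C j)) {N : ℕ} (hCB : ∀ j, N ≤ j → C j = B j) {S : ℕ → Set Y}
    (hS : ∀ j, MeasurableSet (S j)) :
    μ (univ.pi C \ tailCylinder S N) ≤
      μ (univ.pi C) * ∑' k, γ (B (k + N) \ S (k + N)) / γ (B (k + N)) := by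
  have hcover : univ.pi C \ tailCylinder S N ⊆
      ⋃ k, univ.pi (Function.update C (k + N) (B (k + N) \ S (k + N))) := by
    rintro x ⟨hxC, hxS⟩
    obtain ⟨j, hNj, hxj⟩ : ∃ j, N ≤ j ∧ x j ∉ S j := by simpa [tailCylinder] using hxS
    refine mem_iUnion.2 ⟨j - N, fun i _ => ?_⟩
    rw [Nat.sub_add_cancel hNj]
    rcases eq_or_ne i j with rfl | hij
    · rw [Function.update_self, ← hCB i hNj]
      exact ⟨hxC i trivial, hxj⟩
    · rw [Function.update_of_ne hij]
      exact hxC i trivial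
  calc μ (univ.pi C \ tailCylinder S N)
      ≤ ∑' k, μ (univ.pi (Function.update C (k + N) (B (k + N) \ S (k + N)))) :=
        (measure_mono hcover).trans (measure_iUnion_le _)
    _ = ∑' k, μ (univ.pi C) * (γ (B (k + N) \ S (k + N)) / γ (B (k + N))) :=
        tsum_congr fun k => hμ.measure_univ_pi_update hB0 hC hCB (Nat.le_add_left N k)
          ((hB _).diff (hS _))
    _ = μ (univ.pi C) * ∑' k, γ (B (k + N) \ S (k + N)) / γ (B (k + N)) :=
        ENNReal.tsum_mul_left

lemma measure_tailCylinder_diff_tailCylinder_le (hμ : IsRestrictedPower γ B μ)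
    [IsFiniteMeasure γ] (hB0 : ∀ j, γ (B j) ≠ 0) (hB : ∀ j, MeasurableSet (B j))
    {S : ℕ → Set Y} (hS : ∀ j, MeasurableSet (S j)) {n N : ℕ} (hnN : n ≤ N) :
    μ (tailCylinder B n \ tailCylinder S N) ≤
      μ (tailCylinder B n) * ∑' k, γ (B (k + N) \ S (k + N)) / γ (B (k + N)) := by
  rw [tailCylinder_eq_univ_pi B n]
  exact hμ.measure_univ_pi_diff_tailCylinder_le hB0 hB (measurableSet_ite_le hB n)
    (fun j hj => if_pos (hnN.trans hj)) hS

/-- Squeeze `μ (∏ⱼ D j ∩ 𝐁ᴺ)` between `μ (∏ⱼ E N j)` and that mass minus the part of `∏ⱼ E N j`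
leaving `tailCylinder D N`, where `E N` follows `D` below `N` and `B` from `N` on. -/
lemma measure_univ_pi_eq_of_tendsto (hμ : IsRestrictedPower γ B μ) [IsFiniteMeasure γ]
    (hB0 : ∀ j, γ (B j) ≠ 0) (hB : ∀ j, MeasurableSet (B j)) {D : ℕ → Set Y}
    (hD : ∀ j, MeasurableSet (D j)) {m : ℕ} (hDB : ∀ j, m ≤ j → γ (D j) = γ (B j))
    (htail : Tendsto (fun N => ∑' k, γ (B (k + N) \ D (k + N)) / γ (B (k + N))) atTop (𝓝 0)) :
    μ (univ.pi D) = ∏ j ∈ Finset.range m, γ (D j) / γ (B j) := by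
  set c := ∏ j ∈ Finset.range m, γ (D j) / γ (B j) with hc_def
  have hc : c ≠ ∞ := ENNReal.prod_ne_top fun j _ => ENNReal.div_ne_top (measure_ne_top γ _) (hB0 j)
  set E : ℕ → ℕ → Set Y := fun N j => if j < N then D j else B j
  have hE : ∀ N j, MeasurableSet (E N j) := fun N j => by
    by_cases hj : j < N <;> simp [E, hj, hD j, hB j]
  have hEB : ∀ N j, N ≤ j → E N j = B j := fun N j hj => if_neg (not_lt.2 hj)
  have hμE : ∀ N, m ≤ N → μ (univ.pi (E N)) = c := fun N hN => by
    rw [hμ.measure_univ_pi N _ (hE N) (hEB N), hc_def, ← prod_range_div_eq_of_le hB0 hDB hN]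
    exact Finset.prod_congr rfl fun j hj => by rw [show E N j = D j from if_pos (Finset.mem_range.1 hj)]
  have hinter : ∀ N, univ.pi D ∩ tailCylinder B N = univ.pi (E N) ∩ tailCylinder D N :=
    univ_pi_inter_tailCylinder D B
  have hlim := hμ.tendsto_measure_inter_tailCylinder (univ.pi D)
  refine le_antisymm (le_of_tendsto hlim ?_) ?_
  · filter_upwards [eventually_ge_atTop m] with N hN
    rw [hinter N, ← hμE N hN]
    exact measure_mono inter_subset_left
  · have hlower : ∀ᶠ N in atTop, c ≤ μ (univ.pi D ∩ tailCylinder B N) +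
        c * ∑' k, γ (B (k + N) \ D (k + N)) / γ (B (k + N)) := by
      filter_upwards [eventually_ge_atTop m] with N hN
      calc c = μ (univ.pi (E N)) := (hμE N hN).symm
        _ ≤ μ (univ.pi (E N) ∩ tailCylinder D N) + μ (univ.pi (E N) \ tailCylinder D N) :=
          measure_le_inter_add_sdiff μ _ _
        _ ≤ _ := by
          rw [← hinter N, ← hμE N hN]
          exact add_le_add le_rfl
            (hμ.measure_univ_pi_diff_tailCylinder_le hB0 hB (hE N) (hEB N) hD)
    simpa using ge_of_tendsto (hlim.add (ENNReal.Tendsto.const_mul htail (Or.inr hc))) hlower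

lemma restrict_iUnion_tailCylinder (hμ : IsRestrictedPower γ B μ) :
    μ.restrict (⋃ n, tailCylinder B n) = μ :=
  Measure.restrict_eq_self_of_ae_mem (ae_iff.2 hμ.measure_compl_iUnion_tailCylinder)

/-- On each `𝐁ⁿ`, both measures are finite and agree on square cylinders, since a square cylinder
cut down to `𝐁ⁿ` is a cylinder of the form in `measure_univ_pi`. -/
theorem ext [IsFiniteMeasure γ] (hB0 : ∀ j, γ (B j) ≠ 0) (hB : ∀ j, MeasurableSet (B j))
    (hμ : IsRestrictedPower γ B μ) (hν : IsRestrictedPower γ B ν) : μ = ν := by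
  classical
  rw [← hμ.restrict_iUnion_tailCylinder, ← hν.restrict_iUnion_tailCylinder,
    Measure.restrict_iUnion_congr]
  intro n
  have := isFiniteMeasure_restrict.2 (hμ.measure_tailCylinder_ne_top hB0 hB n)
  refine ext_of_generate_finite _ generateFrom_squareCylinders.symm
    (isPiSystem_squareCylinders (fun _ => MeasurableSpace.isPiSystem_measurableSet)
      fun _ => MeasurableSet.univ) ?_ (by simp [hμ.measure_tailCylinder hB,
        hν.measure_tailCylinder hB])
  rintro _ ⟨s, t, ht, rfl⟩
  obtain ⟨m, hsm⟩ := s.exists_nat_subset_range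
  set C : ℕ → Set Y := fun j => (if j ∈ s then t j else univ) ∩ if n ≤ j then B j else univ
  have hC : ∀ j, MeasurableSet (C j) := fun j => by
    refine MeasurableSet.inter ?_ (measurableSet_ite_le hB n j)
    split_ifs
    exacts [ht j trivial, .univ]
  have hCB : ∀ j, max m n ≤ j → C j = B j := fun j hj => by
    have hjs : j ∉ s := fun h => by have := Finset.mem_range.1 (hsm h); omega
    simp [C, hjs, (le_max_right m n).trans hj]
  have hpi : (s : Set ℕ).pi t ∩ tailCylinder B n = univ.pi C := by
    rw [← univ_pi_piecewise_univ, tailCylinder_eq_univ_pi, ← pi_inter_distrib]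
    simp [C, Set.piecewise]
  have hmeas : MeasurableSet ((s : Set ℕ).pi t) :=
    MeasurableSet.pi s.countable_toSet fun j _ => ht j trivial
  rw [Measure.restrict_apply hmeas, Measure.restrict_apply hmeas, hpi,
    hμ.measure_univ_pi _ C hC hCB, hν.measure_univ_pi _ C hC hCB]

lemma measure_compl_preimage_iUnion_tailCylinder (hμ : IsRestrictedPower γ B μ)
    [IsFiniteMeasure γ] (hB0 : ∀ j, γ (B j) ≠ 0) (hB : ∀ j, MeasurableSet (B j))
    {f : Y → Y} (hf : Measurable f) (hsum : ∑' j, γ (B j \ f ⁻¹' B j) / γ (B j) ≠ ∞) :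
    μ ((fun (x : ℕ → Y) j => f (x j)) ⁻¹' (⋃ n, tailCylinder B n)ᶜ) = 0 := by
  set A := (fun (x : ℕ → Y) j => f (x j)) ⁻¹' (⋃ n, tailCylinder B n)ᶜ
  have htail := ENNReal.tendsto_sum_nat_add _ hsum
  have hnull : ∀ n, μ (A ∩ tailCylinder B n) = 0 := fun n => by
    have hbound : ∀ᶠ N in atTop, μ (A ∩ tailCylinder B n) ≤
        μ (tailCylinder B n) * ∑' k, γ (B (k + N) \ f ⁻¹' B (k + N)) / γ (B (k + N)) := by
      filter_upwards [eventually_ge_atTop n] with N hnN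
      have hsub : A ∩ tailCylinder B n ⊆ tailCylinder B n \ tailCylinder (fun j => f ⁻¹' B j) N :=
        fun x hx => ⟨hx.2, fun hxN => hx.1 (mem_iUnion.2 ⟨N, hxN⟩)⟩
      exact (measure_mono hsub).trans
        (hμ.measure_tailCylinder_diff_tailCylinder_le hB0 hB (fun j => hf (hB j)) hnN)
    simpa using ge_of_tendsto
      (ENNReal.Tendsto.const_mul htail (Or.inr (hμ.measure_tailCylinder_ne_top hB0 hB n))) hbound
  exact tendsto_nhds_unique (hμ.tendsto_measure_inter_tailCylinder A)
    (tendsto_const_nhds.congr fun n => (hnull n).symm)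

lemma map_piMap (hμ : IsRestrictedPower γ B μ) [IsFiniteMeasure γ] (hB0 : ∀ j, γ (B j) ≠ 0)
    (hB : ∀ j, MeasurableSet (B j)) {f : Y → Y} (hf : MeasurePreserving f γ γ)
    (hsum : ∑' j, γ (B j \ f ⁻¹' B j) / γ (B j) ≠ ∞) :
    IsRestrictedPower γ B (μ.map fun x j => f (x j)) := by
  have hP : Measurable fun (x : ℕ → Y) j => f (x j) :=
    measurable_pi_lambda _ fun j => hf.measurable.comp (measurable_pi_apply j)
  have hγ : ∀ {s}, MeasurableSet s → γ (f ⁻¹' s) = γ s := fun hs =>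
    hf.measure_preimage hs.nullMeasurableSet
  refine ⟨fun m C hC hCB => ?_, ?_⟩
  · rw [Measure.map_apply hP (MeasurableSet.univ_pi hC)]
    have htail : Tendsto (fun N => ∑' k, γ (B (k + N) \ f ⁻¹' C (k + N)) / γ (B (k + N)))
        atTop (𝓝 0) := by
      refine (ENNReal.tendsto_sum_nat_add _ hsum).congr' ?_
      filter_upwards [eventually_ge_atTop m] with N hN
      exact tsum_congr fun k => by rw [hCB (k + N) (by omega)]
    rw [show (fun (x : ℕ → Y) j => f (x j)) ⁻¹' univ.pi C = univ.pi fun j => f ⁻¹' C j from rfl,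
      hμ.measure_univ_pi_eq_of_tendsto hB0 hB (fun j => hf.measurable (hC j))
        (fun j hj => by rw [hγ (hC j), hCB j hj]) htail]
    exact Finset.prod_congr rfl fun j _ => by rw [hγ (hC j)]
  · rw [Measure.map_apply hP (MeasurableSet.iUnion (measurableSet_tailCylinder hB)).compl]
    exact hμ.measure_compl_preimage_iUnion_tailCylinder hB0 hB hf.measurable hsum

lemma measurePreserving_piMap (hμ : IsRestrictedPower γ B μ) [IsFiniteMeasure γ]
    (hB0 : ∀ j, γ (B j) ≠ 0) (hB : ∀ j, MeasurableSet (B j)) {f : Y → Y}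
    (hf : MeasurePreserving f γ γ) (hsum : ∑' j, γ (B j \ f ⁻¹' B j) / γ (B j) ≠ ∞) :
    MeasurePreserving (fun (x : ℕ → Y) j => f (x j)) μ μ :=
  ⟨measurable_pi_lambda _ fun j => hf.measurable.comp (measurable_pi_apply j),
    (hμ.map_piMap hB0 hB hf hsum).ext hB0 hB hμ⟩

lemma tendsto_iSup_measure_preimage_symmDiff_div (hμ : IsRestrictedPower γ B μ)
    [IsFiniteMeasure γ] (hB0 : ∀ j, γ (B j) ≠ 0) (hB : ∀ j, MeasurableSet (B j)) {ι : Type*}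
    (K : Set ι) {f : ι → Y → Y} (hf : ∀ i ∈ K, MeasurePreserving (f i) γ γ)
    (hsum : ∑' j, (⨆ i ∈ K, γ (B j \ f i ⁻¹' B j)) / γ (B j) ≠ ∞) :
    Tendsto (fun n => ⨆ i ∈ K, μ (symmDiff ((fun (x : ℕ → Y) j => f i (x j)) ⁻¹'
      tailCylinder B n) (tailCylinder B n)) / μ (tailCylinder B n)) atTop (𝓝 0) := by
  set s : ℕ → ℝ≥0∞ := fun j => (⨆ i ∈ K, γ (B j \ f i ⁻¹' B j)) / γ (B j)
  have hle : ∀ i ∈ K, ∀ j, γ (B j \ f i ⁻¹' B j) / γ (B j) ≤ s j := fun i hi j =>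
    ENNReal.div_le_div_right (le_iSup₂ (f := fun i (_ : i ∈ K) => γ (B j \ f i ⁻¹' B j)) i hi) _
  have hbound : ∀ n, ⨆ i ∈ K, μ (symmDiff ((fun (x : ℕ → Y) j => f i (x j)) ⁻¹'
      tailCylinder B n) (tailCylinder B n)) / μ (tailCylinder B n) ≤ 2 * ∑' k, s (k + n) :=
    fun n => iSup₂_le fun i hi => by
      have hP := hμ.measurePreserving_piMap hB0 hB (hf i hi)
        (ne_top_of_le_ne_top hsum (ENNReal.tsum_le_tsum (hle i hi)))
      refine ENNReal.div_le_of_le_mul ?_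
      rw [hP.measure_preimage_symmDiff (measurableSet_tailCylinder hB n)
        (hμ.measure_tailCylinder_ne_top hB0 hB n)]
      calc 2 * μ (tailCylinder B n \ tailCylinder (fun j => f i ⁻¹' B j) n)
          ≤ 2 * (μ (tailCylinder B n) *
              ∑' k, γ (B (k + n) \ f i ⁻¹' B (k + n)) / γ (B (k + n))) := by
            gcongr
            exact hμ.measure_tailCylinder_diff_tailCylinder_le hB0 hB
              (fun j => (hf i hi).measurable (hB j)) le_rfl
        _ ≤ 2 * (μ (tailCylinder B n) * ∑' k, s (k + n)) := by
            gcongr with k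
            exact hle i hi _
        _ = (2 * ∑' k, s (k + n)) * μ (tailCylinder B n) := by ring
  have h2tail := ENNReal.Tendsto.const_mul (ENNReal.tendsto_sum_nat_add s hsum)
    (Or.inr (ENNReal.ofNat_ne_top (n := 2)))
  rw [mul_zero] at h2tail
  exact tendsto_of_tendsto_of_tendsto_of_le_of_le tendsto_const_nhds h2tail
    (fun _ => zero_le) hbound

end IsRestrictedPower

end RestrictedPower

section BorelAction

variable {G X : Type*} [Group G] [MeasurableSpace G] [MeasurableSpace X] {T : G → X → X}

lemma IsBorelAction.inv_apply_apply (hT : IsBorelAction T) (g : G) (x : X) :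
    T g⁻¹ (T g x) = x := by
  rw [← hT.2.2, inv_mul_cancel, hT.2.1]

lemma IsBorelAction.image_eq_preimage_inv (hT : IsBorelAction T) (g : G) :
    image (T g) = preimage (T g⁻¹) :=
  image_eq_preimage_of_inverse (hT.inv_apply_apply g) fun x => by
    simpa using hT.inv_apply_apply g⁻¹ x

lemma IsBorelAction.image_piMap_eq_preimage_inv (hT : IsBorelAction T) (g : G) {ι : Type*} :
    image (fun (x : ι → X) j => T g (x j)) = preimage fun x j => T g⁻¹ (x j) :=
  image_eq_preimage_of_inverse (fun x => funext fun j => hT.inv_apply_apply g (x j))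
    fun x => funext fun j => by simpa using hT.inv_apply_apply g⁻¹ (x j)

lemma IsBorelAction.measure_diff_preimage_inv_le_iSup (hT : IsBorelAction T) (ν : Measure X)
    {K : Set G} {g : G} (hg : g ∈ K) (S : Set X) :
    ν (S \ T g⁻¹ ⁻¹' S) ≤ ⨆ h ∈ K, ν (symmDiff (T h '' S) S) := by
  rw [← hT.image_eq_preimage_inv]
  exact (measure_mono (symmDiff_def (T g '' S) S ▸ subset_union_right)).trans
    (le_iSup₂ (f := fun h (_ : h ∈ K) => ν (symmDiff (T h '' S) S)) g hg)

end BorelAction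

theorem restrictedPower_exhausting_folner_general {G : Type*} [Group G]
    [TopologicalSpace G] [MeasurableSpace G]
    {Y : Type*} [MeasurableSpace Y]
    (γ : Measure Y) [IsProbabilityMeasure γ]
    (T : G → Y → Y) (hT : IsMPAction γ T)
    (B : ℕ → Set Y) (hBm : ∀ n, MeasurableSet (B n)) (hB : ∀ n, γ (B n) = 1 / 2)
    (hsum : ∀ K : Set G, IsCompact K →
      (∑' n, ⨆ g ∈ K, γ (symmDiff (T g '' B n) (B n))) ≠ ∞)
    (μ : Measure (ℕ → Y))
    (hcyl : ∀ (m : ℕ) (C : ℕ → Set Y), (∀ j, MeasurableSet (C j)) →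
      (∀ j, m ≤ j → C j = B j) →
      μ {x : ℕ → Y | ∀ j, x j ∈ C j} = ∏ j ∈ Finset.range m, γ (C j) / γ (B j))
    (hsupp : μ ((⋃ n, tailCylinder B n)ᶜ) = 0) :
    (∀ g : G, MeasurePreserving (fun (x : ℕ → Y) (j : ℕ) => T g (x j)) μ μ) ∧
      (∀ n, μ (tailCylinder B n) = 2 ^ n) ∧
      μ Set.univ = ∞ ∧
      Monotone (tailCylinder B) ∧
      μ ((⋃ n, tailCylinder B n)ᶜ) = 0 ∧
      ∀ K : Set G, IsCompact K →
        Tendsto (fun n => ⨆ g ∈ K,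
          μ (symmDiff ((fun (x : ℕ → Y) (j : ℕ) => T g (x j)) '' tailCylinder B n)
              (tailCylinder B n)) / μ (tailCylinder B n)) atTop (𝓝 0) := by
  have hμ : IsRestrictedPower γ B μ :=
    ⟨fun m C hC hCB => (congrArg μ (by ext; simp)).trans (hcyl m C hC hCB), hsupp⟩
  have hB0 : ∀ j, γ (B j) ≠ 0 := fun j => by simp [hB]
  have hdiv : ∀ (a : ℝ≥0∞) j, a / γ (B j) = 2 * a := fun a j => by
    rw [hB, ENNReal.div_eq_inv_mul]
    norm_num
  have hμB : ∀ n, μ (tailCylinder B n) = 2 ^ n := fun n => by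
    rw [hμ.measure_tailCylinder hBm, Finset.prod_congr rfl fun j _ => hdiv _ j]
    simp
  have hsumK : ∀ K : Set G, IsCompact K →
      ∑' j, (⨆ g ∈ K, γ (B j \ T g⁻¹ ⁻¹' B j)) / γ (B j) ≠ ∞ := fun K hK => by
    simp only [hdiv, ENNReal.tsum_mul_left]
    exact ENNReal.mul_ne_top ofNat_ne_top (ne_top_of_le_ne_top (hsum K hK)
      (ENNReal.tsum_le_tsum fun j => iSup₂_le fun g hg =>
        hT.1.measure_diff_preimage_inv_le_iSup γ hg (B j)))
  have hpres : ∀ g : G, MeasurePreserving (fun (x : ℕ → Y) (j : ℕ) => T g (x j)) μ μ :=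
    fun g => hμ.measurePreserving_piMap hB0 hBm (hT.2 g) (by
      simpa using hsumK {g⁻¹} isCompact_singleton)
  refine ⟨hpres, hμB, ?_, tailCylinder_mono B, hsupp, fun K hK => ?_⟩
  · refine top_unique (le_of_tendsto' (ENNReal.tendsto_pow_atTop_nhds_top_iff.2 one_lt_two)
      fun n => ?_)
    rw [← hμB n]
    exact measure_mono (subset_univ _)
  · simp_rw [hT.1.image_piMap_eq_preimage_inv]
    exact hμ.tendsto_iSup_measure_preimage_symmDiff_div hB0 hBm K (fun g _ => hT.2 g⁻¹)
      (hsumK K hK)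

/-- **From the proof of Theorem B.** The product maps `𝐓 g = T g × T g × ⋯` preserve the
restricted infinite power `μ = γ^𝐁`, `μ 𝐁ⁿ = 2ⁿ` (so `μ` is infinite), and the sets `𝐁ⁿ`
form an exhausting `𝐓`-Følner sequence. -/
theorem restrictedPower_exhausting_folner {G : Type*} [Group G]
    [TopologicalSpace G] [IsTopologicalGroup G] [LocallyCompactSpace G]
    [SecondCountableTopology G] [NoncompactSpace G] [MeasurableSpace G] [BorelSpace G]
    {Y : Type*} [MeasurableSpace Y] [StandardBorelSpace Y]
    (γ : Measure Y) [IsProbabilityMeasure γ] (hna : ∀ y : Y, γ {y} = 0)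
    (T : G → Y → Y) (hT : IsMPAction γ T)
    (B : ℕ → Set Y) (hBm : ∀ n, MeasurableSet (B n)) (hB : ∀ n, γ (B n) = 1 / 2)
    (hsum : ∀ K : Set G, IsCompact K →
      (∑' n, ⨆ g ∈ K, γ (symmDiff (T g '' B n) (B n))) ≠ ∞)
    (μ : Measure (ℕ → Y))
    (hcyl : ∀ (m : ℕ) (C : ℕ → Set Y), (∀ j, MeasurableSet (C j)) →
      (∀ j, m ≤ j → C j = B j) →
      μ {x : ℕ → Y | ∀ j, x j ∈ C j} = ∏ j ∈ Finset.range m, γ (C j) / γ (B j))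
    (hsupp : μ ((⋃ n, tailCylinder B n)ᶜ) = 0) :
    (∀ g : G, MeasurePreserving (fun (x : ℕ → Y) (j : ℕ) => T g (x j)) μ μ) ∧
      (∀ n, μ (tailCylinder B n) = 2 ^ n) ∧
      μ Set.univ = ∞ ∧
      Monotone (tailCylinder B) ∧
      μ ((⋃ n, tailCylinder B n)ᶜ) = 0 ∧
      ∀ K : Set G, IsCompact K →
        Tendsto (fun n => ⨆ g ∈ K,
          μ (symmDiff ((fun (x : ℕ → Y) (j : ℕ) => T g (x j)) '' tailCylinder B n)
              (tailCylinder B n)) / μ (tailCylinder B n)) atTop (𝓝 0) :=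
  restrictedPower_exhausting_folner_general γ T hT B hBm hB hsum μ hcyl hsupp
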